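/- arXiv:1105.1151 — 2 statements merged into one kernel-verified Lean document; each statement's English description precedes it below -/
import Mathlib

section
/- For coprime positive integers p and q, the assignment Δ ↦ D(Δ) := {(x,y) ∈ R_+^{p,q} : pq − qx − py ∈ Δ} is well defined (each D(Δ) is a Young diagram contained in R_+^{p,q}) and is a bijection from the set of 0-normalized Γ^{p,q}-semi-modules onto the set of Young diagrams contained in R_+^{p,q}; moreover |D(Δ)| = |Δ \ Γ^{p,q}| for every Δ. -/
/-- The numerical semigroup `Γ^{p,q} = {ap + bq : a, b ∈ ℕ}`. -/
def Gamma (p q : ℕ) : Set ℕ := {n | ∃ a b : ℕ, n = a * p + b * q}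

/-- A `0`-normalized `Γ^{p,q}`-semi-module: `0 ∈ Δ` and `Δ + Γ^{p,q} ⊆ Δ`. -/
def IsSemiModule (p q : ℕ) (Δ : Set ℕ) : Prop :=
  0 ∈ Δ ∧ ∀ x ∈ Δ, ∀ g ∈ Gamma p q, x + g ∈ Δ

/-- Boxes of the `p × q` rectangle `R^{p,q}`: pairs `(x,y)` with `1 ≤ x ≤ p`, `1 ≤ y ≤ q`. -/
def Rbox (p q : ℕ) : Set (ℕ × ℕ) :=
  {c | 1 ≤ c.1 ∧ c.1 ≤ p ∧ 1 ≤ c.2 ∧ c.2 ≤ q}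

/-- Boxes of `R_+^{p,q}`: boxes with positive label, i.e. `qx + py < pq`. -/
def Rplus (p q : ℕ) : Set (ℕ × ℕ) :=
  {c | 1 ≤ c.1 ∧ 1 ≤ c.2 ∧ q * c.1 + p * c.2 < p * q}

/-- The label `f(x,y) = pq - qx - py` of a box. -/
def boxLabel (p q : ℕ) (c : ℕ × ℕ) : ℕ := p * q - (q * c.1 + p * c.2)

/-- A Young diagram contained in `R_+^{p,q}`: a downward-left closed subset of `R_+^{p,q}`. -/
def IsYoungIn (p q : ℕ) (D : Set (ℕ × ℕ)) : Prop :=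
  D ⊆ Rplus p q ∧
    ∀ x y x' y' : ℕ, (x, y) ∈ D → 1 ≤ x' → x' ≤ x → 1 ≤ y' → y' ≤ y → (x', y') ∈ D

/-- The Young diagram `D(Δ)`: boxes of `R_+^{p,q}` whose label lies in `Δ`. -/
def diagD (p q : ℕ) (Δ : Set ℕ) : Set (ℕ × ℕ) :=
  {c | c ∈ Rplus p q ∧ boxLabel p q c ∈ Δ}

/-!
Coprimality makes `(x, y) ↦ qx + py` injective on `x < p` and lets one solve for the residue of
`x` modulo `p`; hence the labels identify `R_+^{p,q}` bijectively with `ℕ \ Γ^{p,q}`. If adding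
`ap + bq` to the label of a box gives the label of another box, that box is the first one moved
`b` steps left and `a` steps down. So `Γ^{p,q}`-stability of `Δ` is exactly the Young condition
on `D(Δ)`, and `Δ = Γ^{p,q} ∪ f(D(Δ))` recovers `Δ` from its diagram.
-/

lemma zero_mem_Gamma (p q : ℕ) : 0 ∈ Gamma p q := ⟨0, 0, by simp⟩

lemma add_mem_Gamma {p q m n : ℕ} (hm : m ∈ Gamma p q) (hn : n ∈ Gamma p q) :
    m + n ∈ Gamma p q := by
  obtain ⟨a, b, rfl⟩ := hm
  obtain ⟨a', b', rfl⟩ := hn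
  exact ⟨a + a', b + b', by ring⟩

lemma IsSemiModule.Gamma_subset {p q : ℕ} {Δ : Set ℕ} (hΔ : IsSemiModule p q Δ) :
    Gamma p q ⊆ Δ := fun g hg => by
  simpa using hΔ.2 0 hΔ.1 g hg

lemma eq_and_eq_of_mul_add_mul_eq {p q u v u' v' : ℕ} (hpq : Nat.Coprime p q)
    (hu : u < p) (hu' : u' < p) (h : q * u + p * v = q * u' + p * v') : u = u' ∧ v = v' := by
  have hmod : q * u ≡ q * u' [MOD p] := by
    simpa [Nat.ModEq, Nat.add_mul_mod_self_left] using congrArg (· % p) h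
  obtain rfl : u = u' := (hmod.cancel_left_of_coprime hpq).eq_of_lt_of_lt hu hu'
  exact ⟨rfl, Nat.eq_of_mul_eq_mul_left (by omega) (Nat.add_left_cancel h)⟩

section Boxes

variable {p q : ℕ}

lemma boxLabel_add_weight {c : ℕ × ℕ} (hc : c ∈ Rplus p q) :
    boxLabel p q c + (q * c.1 + p * c.2) = p * q :=
  Nat.sub_add_cancel hc.2.2.le

lemma fst_lt_of_mem_Rplus {c : ℕ × ℕ} (hc : c ∈ Rplus p q) : c.1 < p := by
  obtain ⟨-, -, hlt⟩ := hc
  exact Nat.lt_of_mul_lt_mul_left (a := q) (by rw [mul_comm q p]; omega)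

-- A label `ap + bq` would give `q(x + b) + p(y + a) = pq` with `x + b < p`, a second
-- representation of `q·0 + p·q`.
lemma boxLabel_notMem_Gamma (hpq : Nat.Coprime p q) {c : ℕ × ℕ} (hc : c ∈ Rplus p q) :
    boxLabel p q c ∉ Gamma p q := by
  rintro ⟨a, b, hab⟩
  have hsum := boxLabel_add_weight hc
  have hp : 0 < p := Nat.zero_lt_of_lt (fst_lt_of_mem_Rplus hc)
  obtain ⟨hx, hy, -⟩ := hc
  have hweight : q * (c.1 + b) + p * (c.2 + a) = q * 0 + p * q := by rw [← hsum, hab]; ring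
  have hlt : c.1 + b < p := by
    refine Nat.lt_of_mul_lt_mul_left (a := q) ?_
    nlinarith
  have := (eq_and_eq_of_mul_add_mul_eq hpq hlt hp hweight).1
  omega

lemma boxLabel_injOn (hpq : Nat.Coprime p q) : Set.InjOn (boxLabel p q) (Rplus p q) := by
  intro c hc c' hc' h
  have hweight : q * c.1 + p * c.2 = q * c'.1 + p * c'.2 := by
    have := boxLabel_add_weight hc
    have := boxLabel_add_weight hc'
    omega
  obtain ⟨h1, h2⟩ :=
    eq_and_eq_of_mul_add_mul_eq hpq (fst_lt_of_mem_Rplus hc) (fst_lt_of_mem_Rplus hc') hweight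
  exact Prod.ext h1 h2

-- Solve `qb ≡ n (mod p)` with `b < p`; then `n < qb` (otherwise `n ∈ Γ`), and `qb - n = pt`
-- places `n` at the box `(p - b, t)`.
lemma exists_boxLabel_eq (hpq : Nat.Coprime p q) {n : ℕ} (hn : n ∉ Gamma p q) :
    ∃ c ∈ Rplus p q, boxLabel p q c = n := by
  have hp : p ≠ 0 := by
    rintro rfl
    exact hn ⟨0, n, by simp [(Nat.coprime_zero_left q).mp hpq]⟩
  obtain ⟨b, hbp, hb⟩ := Nat.exists_mul_mod_eq_of_coprime n hpq.symm hp
  have hlt : n < q * b := by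
    by_contra! hle
    obtain ⟨a, ha⟩ := (Nat.modEq_iff_dvd' hle).mp hb
    exact hn ⟨a, b, by rw [mul_comm a p, mul_comm b q]; omega⟩
  obtain ⟨t, ht⟩ := (Nat.modEq_iff_dvd' hlt.le).mp (Nat.ModEq.symm hb)
  have hn0 : n ≠ 0 := fun h => hn (h ▸ zero_mem_Gamma p q)
  have ht1 : 1 ≤ t := Nat.pos_of_ne_zero (by rintro rfl; omega)
  have hweight : q * (p - b) + p * t + n = p * q := by
    zify [hbp.le, hlt.le] at ht ⊢
    linear_combination -ht
  refine ⟨(p - b, t), ⟨by dsimp only; omega, ht1, by dsimp only; omega⟩, ?_⟩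
  show p * q - (q * (p - b) + p * t) = n
  omega

theorem bijOn_boxLabel (hpq : Nat.Coprime p q) :
    Set.BijOn (boxLabel p q) (Rplus p q) (Gamma p q)ᶜ :=
  ⟨fun _ hc => boxLabel_notMem_Gamma hpq hc, boxLabel_injOn hpq,
    fun _ hn => exists_boxLabel_eq hpq hn⟩

lemma boxLabel_eq_add_of_le {x y x' y' : ℕ} (hc : (x, y) ∈ Rplus p q) (hx : x' ≤ x)
    (hy : y' ≤ y) :
    boxLabel p q (x', y') = boxLabel p q (x, y) + ((y - y') * p + (x - x') * q) := by
  have hsum := boxLabel_add_weight hc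
  simp only [boxLabel] at hsum ⊢
  obtain ⟨dx, rfl⟩ := Nat.exists_eq_add_of_le hx
  obtain ⟨dy, rfl⟩ := Nat.exists_eq_add_of_le hy
  simp only [Nat.add_sub_cancel_left, mul_add, mul_comm dy p, mul_comm dx q] at hsum ⊢
  omega

lemma le_of_boxLabel_eq_add {x y x' y' a b : ℕ} (hpq : Nat.Coprime p q)
    (hc : (x, y) ∈ Rplus p q) (hc' : (x', y') ∈ Rplus p q)
    (h : boxLabel p q (x', y') = boxLabel p q (x, y) + (a * p + b * q)) :
    x' ≤ x ∧ y' ≤ y := by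
  have hsum := boxLabel_add_weight hc
  have hsum' := boxLabel_add_weight hc'
  simp only at hsum hsum'
  have hweight : q * (x' + b) + p * (y' + a) = q * x + p * y := by linarith
  have hlt : x' + b < p := by
    refine Nat.lt_of_mul_lt_mul_left (a := q) ?_
    have hcw : q * x + p * y < p * q := hc.2.2
    nlinarith
  obtain ⟨h1, h2⟩ := eq_and_eq_of_mul_add_mul_eq hpq hlt (fst_lt_of_mem_Rplus hc) hweight
  omega

end Boxes

section Correspondence

variable {p q : ℕ}

lemma IsSemiModule.isYoungIn_diagD {Δ : Set ℕ} (hΔ : IsSemiModule p q Δ) :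
    IsYoungIn p q (diagD p q Δ) := by
  refine ⟨fun _ hc => hc.1, ?_⟩
  rintro x y x' y' ⟨hc, hlabel⟩ hx' hx'x hy' hy'y
  have hle : q * x' + p * y' ≤ q * x + p * y := by gcongr
  refine ⟨⟨hx', hy', hle.trans_lt hc.2.2⟩, ?_⟩
  rw [boxLabel_eq_add_of_le hc hx'x hy'y]
  exact hΔ.2 _ hlabel _ ⟨y - y', x - x', rfl⟩

lemma image_boxLabel_diagD (hpq : Nat.Coprime p q) (Δ : Set ℕ) :
    boxLabel p q '' diagD p q Δ = Δ \ Gamma p q := by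
  change boxLabel p q '' (Rplus p q ∩ boxLabel p q ⁻¹' Δ) = _
  rw [Set.image_inter_preimage, (bijOn_boxLabel hpq).image_eq, Set.sdiff_eq, Set.inter_comm]

lemma ncard_diagD (hpq : Nat.Coprime p q) (Δ : Set ℕ) :
    (diagD p q Δ).ncard = (Δ \ Gamma p q).ncard := by
  rw [← image_boxLabel_diagD hpq Δ, ((boxLabel_injOn hpq).mono fun _ hc => hc.1).ncard_image]

variable (p q) in
def semiModuleOf (D : Set (ℕ × ℕ)) : Set ℕ := Gamma p q ∪ boxLabel p q '' D

lemma isSemiModule_semiModuleOf (hpq : Nat.Coprime p q) {D : Set (ℕ × ℕ)}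
    (hD : IsYoungIn p q D) :
    IsSemiModule p q (semiModuleOf p q D) := by
  refine ⟨Or.inl (zero_mem_Gamma p q), ?_⟩
  rintro n (hn | ⟨⟨x, y⟩, hc, rfl⟩) g ⟨a, b, rfl⟩
  · exact Or.inl (add_mem_Gamma hn ⟨a, b, rfl⟩)
  by_cases hΓ : boxLabel p q (x, y) + (a * p + b * q) ∈ Gamma p q
  · exact Or.inl hΓ
  obtain ⟨⟨x', y'⟩, hc', hlabel⟩ := exists_boxLabel_eq hpq hΓ
  obtain ⟨hx, hy⟩ := le_of_boxLabel_eq_add hpq (hD.1 hc) hc' hlabel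
  exact Or.inr ⟨(x', y'), hD.2 x y x' y' hc hc'.1 hx hc'.2.1 hy, hlabel⟩

lemma diagD_semiModuleOf (hpq : Nat.Coprime p q) {D : Set (ℕ × ℕ)} (hD : D ⊆ Rplus p q) :
    diagD p q (semiModuleOf p q D) = D := by
  ext c
  constructor
  · rintro ⟨hc, hΓ | ⟨c', hc', hlabel⟩⟩
    · exact absurd hΓ (boxLabel_notMem_Gamma hpq hc)
    · rwa [← boxLabel_injOn hpq (hD hc') hc hlabel]
  · exact fun hc => ⟨hD hc, Or.inr ⟨c, hc, rfl⟩⟩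

lemma semiModuleOf_diagD (hpq : Nat.Coprime p q) {Δ : Set ℕ} (hΔ : IsSemiModule p q Δ) :
    semiModuleOf p q (diagD p q Δ) = Δ := by
  rw [semiModuleOf, image_boxLabel_diagD hpq, Set.union_sdiff_cancel hΔ.Gamma_subset]

end Correspondence

theorem stmt_1_general (p q : ℕ) (hpq : Nat.Coprime p q) :
    (∀ Δ : Set ℕ, IsSemiModule p q Δ → IsYoungIn p q (diagD p q Δ)) ∧
    Set.BijOn (diagD p q) {Δ | IsSemiModule p q Δ} {D | IsYoungIn p q D} ∧
    (∀ Δ : Set ℕ, IsSemiModule p q Δ → (diagD p q Δ).ncard = (Δ \ Gamma p q).ncard) := by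
  refine ⟨fun _ hΔ => hΔ.isYoungIn_diagD, ?_, fun Δ _ => ncard_diagD hpq Δ⟩
  exact Set.InvOn.bijOn
    ⟨fun _ hΔ => semiModuleOf_diagD hpq hΔ, fun _ hD => diagD_semiModuleOf hpq hD.1⟩
    (fun _ hΔ => hΔ.isYoungIn_diagD) (fun _ hD => isSemiModule_semiModuleOf hpq hD)

/-- `Δ ↦ D(Δ)` is well defined (each `D(Δ)` is a Young diagram contained in
`R_+^{p,q}`) and is a bijection from the `0`-normalized `Γ^{p,q}`-semi-modules onto the
Young diagrams contained in `R_+^{p,q}`; moreover `|D(Δ)| = |Δ \ Γ^{p,q}|`. -/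
theorem stmt_1 (p q : ℕ) (hp : 0 < p) (hq : 0 < q) (hpq : Nat.Coprime p q) :
    (∀ Δ : Set ℕ, IsSemiModule p q Δ → IsYoungIn p q (diagD p q Δ)) ∧
    Set.BijOn (diagD p q) {Δ | IsSemiModule p q Δ} {D | IsYoungIn p q D} ∧
    (∀ Δ : Set ℕ, IsSemiModule p q Δ → (diagD p q Δ).ncard = (Δ \ Gamma p q).ncard) :=
  stmt_1_general p q hpq
end

section
/- Let p and q be coprime positive integers and Δ a 0-normalized Γ^{p,q}-semi-module. Then dim Δ equals the number of pairs (a, b) where a is a p-generator of Δ, b is a q-cogenerator of Δ, and a < b. -/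
/-- The `p`-basis of `Δ`: the set `Δ \ (Δ + p)` of `p`-generators of `Δ`. -/
def pBasis (p : ℕ) (Δ : Set ℕ) : Set ℕ := Δ \ ((· + p) '' Δ)

/-- `g(a) = |[a, a + q) \ Δ|`. -/
noncomputable def gInt (q : ℕ) (Δ : Set ℕ) (a : ℕ) : ℕ := (Set.Ico a (a + q) \ Δ).ncard

/-- The dimension of a semi-module: `dim Δ = Σ_{a ∈ p-basis} |[a, a + q) \ Δ|`. -/
noncomputable def dimDelta (p q : ℕ) (Δ : Set ℕ) : ℕ :=
  ∑ᶠ a ∈ pBasis p Δ, gInt q Δ a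

/-- `Δ ⊆ ℕ` viewed as a subset of `ℤ`. -/
def deltaZ (Δ : Set ℕ) : Set ℤ := {z | ∃ m ∈ Δ, (m : ℤ) = z}

/-- The `q`-cogenerators of `Δ`: integers `y` with `y ∉ Δ` and `y + q ∈ Δ`. -/
def qCogen (q : ℕ) (Δ : Set ℕ) : Set ℤ := {y | y ∉ deltaZ Δ ∧ y + (q : ℤ) ∈ deltaZ Δ}

/-!
Inside each residue class modulo `q`, the semi-module `Δ` is closed under adding `q` and, by
coprimality, nonempty; so the class contains exactly one `q`-cogenerator, its least element of `Δ`
minus `q`. For `a ∈ Δ`, reduction modulo `q` into `[a, a + q)` therefore matches the cogenerators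
above `a` with the gaps of `Δ` in `[a, a + q)`. Summing over the `p`-generators `a` counts the
pairs.
-/

open Set

lemma Gamma.exists_forall_ge_mem {p q : ℕ} (hpq : p.Coprime q) : ∃ N, ∀ n ≥ N, n ∈ Gamma p q := by
  obtain ⟨N, hN⟩ := Nat.exists_mem_closure_of_ge ({p, q} : Set ℕ)
  have hgcd : Nat.setGcd {p, q} = 1 := Nat.eq_one_of_dvd_one <| hpq ▸
    Nat.dvd_gcd (Nat.setGcd_dvd_of_mem (by simp)) (Nat.setGcd_dvd_of_mem (by simp))
  refine ⟨N, fun n hn => ?_⟩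
  obtain ⟨a, b, hab⟩ := (AddSubmonoid.mem_closure_pair p q n).1 (hN n hn (hgcd ▸ one_dvd n))
  exact ⟨a, b, by simpa using hab.symm⟩

lemma ncard_setOf_fst_mem_snd_mem_eq_finsum {α β : Type*} {s : Set α} {t : α → Set β}
    (hs : s.Finite) (ht : ∀ a ∈ s, (t a).Finite) :
    {x : α × β | x.1 ∈ s ∧ x.2 ∈ t x.1}.ncard = ∑ᶠ a ∈ s, (t a).ncard := by
  have hunion : {x : α × β | x.1 ∈ s ∧ x.2 ∈ t x.1} = ⋃ a ∈ s, Prod.mk a '' t a := by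
    ext ⟨a, b⟩
    simp [and_comm]
  rw [hunion, hs.ncard_biUnion (fun a ha => (ht a ha).image _)]
  · exact finsum_mem_congr rfl fun a _ => ncard_image_of_injective _ (Prod.mk_right_injective a)
  · intro a _ a' _ hne
    exact disjoint_left.2 fun _ ⟨_, _, hx⟩ ⟨_, _, hx'⟩ =>
      hne (congrArg Prod.fst (hx.trans hx'.symm))

section IntSubset

variable {q : ℤ} {S : Set ℤ}

lemma add_mul_mem_of_forall_add_mem (hS : ∀ x ∈ S, x + q ∈ S) {x : ℤ} (hx : x ∈ S) (n : ℕ) :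
    x + n * q ∈ S := by
  induction n with
  | zero => simpa using hx
  | succ n ih => simpa [add_mul, ← add_assoc] using hS _ ih

lemma mem_of_le_of_modEq (hq : 0 < q) (hS : ∀ x ∈ S, x + q ∈ S) {x y : ℤ} (hx : x ∈ S)
    (hxy : x ≤ y) (hmod : x ≡ y [ZMOD q]) : y ∈ S := by
  obtain ⟨k, hk⟩ := hmod.dvd
  have hk0 : 0 ≤ k := nonneg_of_mul_nonneg_right (hk ▸ sub_nonneg.2 hxy) hq
  lift k to ℕ using hk0
  simpa [show y = x + k * q by linarith] using add_mul_mem_of_forall_add_mem hS hx k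

lemma eq_of_modEq_of_cogen (hq : 0 < q) (hS : ∀ x ∈ S, x + q ∈ S) {b b' : ℤ}
    (hb : b ∉ S) (hbq : b + q ∈ S) (hb' : b' ∉ S) (hb'q : b' + q ∈ S) (hmod : b ≡ b' [ZMOD q]) :
    b = b' := by
  wlog hle : b ≤ b' generalizing b b'
  · exact (this hb' hb'q hb hbq hmod.symm (le_of_not_ge hle)).symm
  by_contra hne
  have hqle : q ≤ b' - b := Int.le_of_dvd (sub_pos.2 (lt_of_le_of_ne hle hne)) hmod.dvd
  exact hb' (mem_of_le_of_modEq hq hS hbq (by linarith) (Int.add_modulus_modEq_iff.mpr hmod))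

lemma exists_cogen_modEq_of_notMem (hq : 0 ≤ q) (hcover : ∀ x, ∃ n : ℕ, x + n * q ∈ S) {x : ℤ}
    (hx : x ∉ S) : ∃ b, b ∉ S ∧ b + q ∈ S ∧ x ≤ b ∧ x ≡ b [ZMOD q] := by
  obtain ⟨n, hn⟩ := hcover x
  induction n with
  | zero => simp_all
  | succ n ih =>
    by_cases h : x + n * q ∈ S
    · exact ih h
    · refine ⟨x + n * q, h, by simpa [add_mul, add_assoc] using hn, ?_,
        Int.modEq_add_mul_modulus_iff.mpr rfl⟩
      nlinarith

lemma ncard_Ico_diff_eq_ncard_cogen (hq : 0 < q) (hS : ∀ x ∈ S, x + q ∈ S)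
    (hcover : ∀ x, ∃ n : ℕ, x + n * q ∈ S) {a : ℤ} (ha : a ∈ S) :
    (Ico a (a + q) \ S).ncard = {b | (b ∉ S ∧ b + q ∈ S) ∧ a < b}.ncard := by
  refine (ncard_congr (fun b _ => a + (b - a) % q) ?_ ?_ ?_).symm
  · rintro b ⟨⟨hb, -⟩, hab⟩
    have hrep : a + (b - a) % q ≡ b [ZMOD q] := by
      simpa using (Int.mod_modEq (b - a) q).add_left a
    have hle : (b - a) % q ≤ b - a := by
      nlinarith [Int.emod_add_mul_ediv (b - a) q, Int.ediv_nonneg (sub_nonneg.2 hab.le) hq.le]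
    refine ⟨⟨by linarith [Int.emod_nonneg (b - a) hq.ne'],
      by linarith [Int.emod_lt_of_pos (b - a) hq]⟩,
      fun hmem => hb (mem_of_le_of_modEq hq hS hmem (by linarith) hrep)⟩
  · rintro b b' ⟨⟨hb, hbq⟩, -⟩ ⟨⟨hb', hb'q⟩, -⟩ h
    have hmod : b - a ≡ b' - a [ZMOD q] := add_left_cancel h
    exact eq_of_modEq_of_cogen hq hS hb hbq hb' hb'q (by simpa using hmod.add_right a)
  · rintro x ⟨⟨hax, hxa⟩, hx⟩
    obtain ⟨b, hb, hbq, hxb, hmod⟩ := exists_cogen_modEq_of_notMem hq.le hcover hx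
    have hab : a < b := lt_of_lt_of_le (lt_of_le_of_ne hax fun h => hx (h ▸ ha)) hxb
    refine ⟨b, ⟨⟨hb, hbq⟩, hab⟩, ?_⟩
    have hred : (b - a) % q = x - a := by
      rw [← (hmod.sub_right a).eq, Int.emod_eq_of_lt (by linarith) (by linarith)]
    simp [hred]

end IntSubset

namespace IsSemiModule

variable {p q : ℕ} {Δ : Set ℕ}

lemma Gamma_subset_s4 (hΔ : IsSemiModule p q Δ) : Gamma p q ⊆ Δ := fun g hg => by
  simpa using hΔ.2 0 hΔ.1 g hg

lemma add_right_mem (hΔ : IsSemiModule p q Δ) {x : ℕ} (hx : x ∈ Δ) : x + q ∈ Δ :=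
  hΔ.2 x hx q ⟨0, 1, by ring⟩

lemma exists_forall_ge_mem (hΔ : IsSemiModule p q Δ) (hpq : p.Coprime q) :
    ∃ N, ∀ n ≥ N, n ∈ Δ :=
  (Gamma.exists_forall_ge_mem hpq).imp fun _ hN n hn => hΔ.Gamma_subset_s4 (hN n hn)

lemma pBasis_finite (hΔ : IsSemiModule p q Δ) (hpq : p.Coprime q) : (pBasis p Δ).Finite := by
  obtain ⟨N, hN⟩ := hΔ.exists_forall_ge_mem hpq
  refine (finite_Iio (N + p)).subset fun a ha => mem_Iio.2 <| lt_of_not_ge fun hge => ?_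
  exact ha.2 ⟨a - p, hN _ (by omega), Nat.sub_add_cancel (by omega)⟩

lemma add_mem_deltaZ (hΔ : IsSemiModule p q Δ) {z : ℤ} (hz : z ∈ deltaZ Δ) :
    z + q ∈ deltaZ Δ := by
  obtain ⟨m, hm, rfl⟩ := hz
  exact ⟨m + q, hΔ.add_right_mem hm, by push_cast; rfl⟩

lemma exists_forall_ge_mem_deltaZ (hΔ : IsSemiModule p q Δ) (hpq : p.Coprime q) :
    ∃ N : ℤ, ∀ z ≥ N, z ∈ deltaZ Δ := by
  obtain ⟨N, hN⟩ := hΔ.exists_forall_ge_mem hpq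
  exact ⟨N, fun z hz => ⟨z.toNat, hN _ (by omega), by omega⟩⟩

lemma qCogen_finite (hΔ : IsSemiModule p q Δ) (hpq : p.Coprime q) : (qCogen q Δ).Finite := by
  obtain ⟨N, hN⟩ := hΔ.exists_forall_ge_mem_deltaZ hpq
  refine (finite_Ico (-q : ℤ) N).subset fun b ⟨hb, hbq⟩ => ⟨?_, lt_of_not_ge (hb ∘ hN b)⟩
  obtain ⟨m, -, hm⟩ := hbq
  omega

lemma gInt_eq_ncard (hΔ : IsSemiModule p q Δ) (hq : 0 < q) (hpq : p.Coprime q) {a : ℕ}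
    (ha : a ∈ Δ) : gInt q Δ a = {b | b ∈ qCogen q Δ ∧ (a : ℤ) < b}.ncard := by
  obtain ⟨N, hN⟩ := hΔ.exists_forall_ge_mem_deltaZ hpq
  have hcover (x : ℤ) : ∃ n : ℕ, x + n * q ∈ deltaZ Δ :=
    ⟨(N - x).toNat, hN _ <| by
      nlinarith [Int.self_le_toNat (N - x), (N - x).toNat.cast_nonneg (α := ℤ)]⟩
  rw [gInt, ← ncard_image_of_injective _ (Nat.cast_injective (R := ℤ)),
    image_sdiff Nat.cast_injective, Nat.image_cast_int_Ico, Nat.cast_add]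
  exact ncard_Ico_diff_eq_ncard_cogen (by exact_mod_cast hq) (fun _ => hΔ.add_mem_deltaZ) hcover
    ⟨a, ha, rfl⟩

end IsSemiModule

theorem stmt_4_general (p q : ℕ) (hq : 0 < q) (hpq : Nat.Coprime p q)
    (Δ : Set ℕ) (hΔ : IsSemiModule p q Δ) :
    dimDelta p q Δ =
      {ab : ℕ × ℤ | ab.1 ∈ pBasis p Δ ∧ ab.2 ∈ qCogen q Δ ∧ (ab.1 : ℤ) < ab.2}.ncard := by
  calc dimDelta p q Δ = ∑ᶠ a ∈ pBasis p Δ, {b | b ∈ qCogen q Δ ∧ (a : ℤ) < b}.ncard :=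
        finsum_mem_congr rfl fun a ha => hΔ.gInt_eq_ncard hq hpq ha.1
    _ = _ := (ncard_setOf_fst_mem_snd_mem_eq_finsum (hΔ.pBasis_finite hpq)
        fun _ _ => (hΔ.qCogen_finite hpq).subset fun _ hb => hb.1).symm

/-- `dim Δ` equals the number of pairs `(a, b)` with `a` a `p`-generator of
`Δ`, `b` a `q`-cogenerator of `Δ`, and `a < b`. -/
theorem stmt_4 (p q : ℕ) (hp : 0 < p) (hq : 0 < q) (hpq : Nat.Coprime p q)
    (Δ : Set ℕ) (hΔ : IsSemiModule p q Δ) :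
    dimDelta p q Δ =
      {ab : ℕ × ℤ | ab.1 ∈ pBasis p Δ ∧ ab.2 ∈ qCogen q Δ ∧ (ab.1 : ℤ) < ab.2}.ncard :=
  stmt_4_general p q hq hpq Δ hΔ
end
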